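/- For all integers r and n with r ≥ 3 and r+1 ≤ n ≤ 2r−2, the maximum number of hyperedges in an n-vertex connected BP_3-free r-uniform hypergraph equals 2; moreover, every n-vertex connected BP_3-free r-uniform hypergraph with exactly 2 hyperedges consists of two hyperedges sharing at least two common vertices. -/

import Mathlib

namespace Berge

def IsBergePath {n : ℕ} (E : Finset (Finset (Fin n))) (k : ℕ)
    (v : Fin (k + 1) → Fin n) (f : Fin k → Finset (Fin n)) : Prop :=
  Function.Injective v ∧ Function.Injective f ∧ (∀ i, f i ∈ E) ∧
    ∀ i : Fin k, v i.castSucc ∈ f i ∧ v i.succ ∈ f i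

def HasBergePath {n : ℕ} (E : Finset (Finset (Fin n))) (k : ℕ) : Prop :=
  ∃ v f, IsBergePath E k v f

def BPFree {n : ℕ} (E : Finset (Finset (Fin n))) (k : ℕ) : Prop :=
  ¬ HasBergePath E k

def Connected {n : ℕ} (E : Finset (Finset (Fin n))) : Prop :=
  ∀ x y : Fin n, ∃ (k : ℕ) (v : Fin (k + 1) → Fin n) (f : Fin k → Finset (Fin n)),
    IsBergePath E k v f ∧ (∃ i, v i = x) ∧ (∃ i, v i = y)

def Uniform {n : ℕ} (E : Finset (Finset (Fin n))) (r : ℕ) : Prop :=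
  ∀ e ∈ E, e.card = r

noncomputable def exConn (n r k : ℕ) : ℕ :=
  sSup {m | ∃ E : Finset (Finset (Fin n)),
    Uniform E r ∧ Connected E ∧ BPFree E k ∧ E.card = m}

def IsBergeCycle {n : ℕ} (E : Finset (Finset (Fin n))) (k : ℕ)
    (v : Fin k → Fin n) (f : Fin k → Finset (Fin n)) : Prop :=
  Function.Injective v ∧ Function.Injective f ∧ (∀ i, f i ∈ E) ∧
    ∀ i : Fin k, v i ∈ f i ∧ v ⟨(i.val + 1) % k, Nat.mod_lt _ i.pos⟩ ∈ f i

/-! For `n + 2 ≤ 2 r`, any two `r`-sets of an `n`-set share at least two vertices. Hence any three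
edges `a, b, c` yield the Berge path `v₁ ∈ a \ b`, `v₂ ∈ a ∩ b`, `v₃ ∈ b ∩ c`, `v₄ ∈ c \ a`, so at
most two edges are possible; and two `r`-sets covering the vertex set (e.g. an initial and a final
segment) form a connected hypergraph with two edges. -/

section Vectors

variable {α : Type*}

lemma injective_vec_two {x y : α} (hxy : x ≠ y) : Function.Injective ![x, y] := by
  intro i j h; fin_cases i <;> fin_cases j <;> simp_all

lemma injective_vec_three {x y z : α} (hxy : x ≠ y) (hxz : x ≠ z) (hyz : y ≠ z) :
    Function.Injective ![x, y, z] := by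
  intro i j h; fin_cases i <;> fin_cases j <;> simp_all

lemma injective_vec_four {x y z w : α} (hxy : x ≠ y) (hxz : x ≠ z) (hxw : x ≠ w)
    (hyz : y ≠ z) (hyw : y ≠ w) (hzw : z ≠ w) : Function.Injective ![x, y, z, w] := by
  intro i j h; fin_cases i <;> fin_cases j <;> simp_all

end Vectors

lemma two_le_card_inter {n r : ℕ} (hnr : n + 2 ≤ 2 * r) {e f : Finset (Fin n)}
    (he : e.card = r) (hf : f.card = r) : 2 ≤ (e ∩ f).card := by
  have hunion : (e ∪ f).card ≤ n := by simpa using (e ∪ f).card_le_univ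
  have := Finset.card_union_add_card_inter e f
  omega

section Paths

variable {n : ℕ} {E : Finset (Finset (Fin n))}

lemma bpFree_of_card_lt {k : ℕ} (hE : E.card < k) : BPFree E k := by
  rintro ⟨v, f, -, hf, hfE, -⟩
  have := Finset.card_le_card_of_injOn f (s := Finset.univ) (fun i _ => hfE i) hf.injOn
  simp only [Finset.card_univ, Fintype.card_fin] at this
  omega

lemma hasBergePath_three {v₁ v₂ v₃ v₄ : Fin n} {a b c : Finset (Fin n)}
    (ha : a ∈ E) (hb : b ∈ E) (hc : c ∈ E) (hab : a ≠ b) (hac : a ≠ c) (hbc : b ≠ c)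
    (hv₁ : v₁ ∈ a \ b) (hv₂ : v₂ ∈ a ∩ b) (hv₃ : v₃ ∈ b ∩ c) (hv₄ : v₄ ∈ c \ a)
    (hv₂₃ : v₂ ≠ v₃) (hv₃₄ : v₃ ≠ v₄) : HasBergePath E 3 := by
  simp only [Finset.mem_sdiff, Finset.mem_inter] at hv₁ hv₂ hv₃ hv₄
  have hv₁₂ : v₁ ≠ v₂ := by rintro rfl; exact hv₁.2 hv₂.2
  have hv₁₃ : v₁ ≠ v₃ := by rintro rfl; exact hv₁.2 hv₃.1
  have hv₁₄ : v₁ ≠ v₄ := by rintro rfl; exact hv₄.2 hv₁.1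
  have hv₂₄ : v₂ ≠ v₄ := by rintro rfl; exact hv₄.2 hv₂.1
  refine ⟨![v₁, v₂, v₃, v₄], ![a, b, c],
    injective_vec_four hv₁₂ hv₁₃ hv₁₄ hv₂₃ hv₂₄ hv₃₄, injective_vec_three hab hac hbc, ?_, ?_⟩
  · intro i; fin_cases i <;> assumption
  · intro i; fin_cases i
    · exact ⟨hv₁.1, hv₂.1⟩
    · exact ⟨hv₂.2, hv₃.1⟩
    · exact ⟨hv₃.2, hv₄.1⟩

lemma card_le_two_of_bpFree {r : ℕ} (hnr : n + 2 ≤ 2 * r) (hu : Uniform E r)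
    (hE : BPFree E 3) : E.card ≤ 2 := by
  by_contra! hlt
  obtain ⟨T, hTE, hT⟩ := Finset.exists_subset_card_eq (hlt : 3 ≤ E.card)
  obtain ⟨a, b, c, hab, hac, hbc, rfl⟩ := Finset.card_eq_three.mp hT
  have ha : a ∈ E := hTE (by simp)
  have hb : b ∈ E := hTE (by simp)
  have hc : c ∈ E := hTE (by simp)
  have hdiff : ∀ {s t : Finset (Fin n)}, s ∈ E → t ∈ E → s ≠ t → (s \ t).Nonempty :=
    fun {s t} hs ht hst =>
    Finset.sdiff_nonempty.mpr fun hsub =>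
      hst (Finset.eq_of_subset_of_card_le hsub (by rw [hu s hs, hu t ht]))
  obtain ⟨v₁, hv₁⟩ := hdiff ha hb hab
  obtain ⟨v₄, hv₄⟩ := hdiff hc ha hac.symm
  obtain ⟨v₃, hv₃, hv₃₄⟩ :=
    Finset.exists_mem_ne (two_le_card_inter hnr (hu b hb) (hu c hc)) v₄
  obtain ⟨v₂, hv₂, hv₂₃⟩ :=
    Finset.exists_mem_ne (two_le_card_inter hnr (hu a ha) (hu b hb)) v₃
  exact hE (hasBergePath_three ha hb hc hab hac hbc hv₁ hv₂ hv₃ hv₄ hv₂₃ hv₃₄)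

/-- `Connected E` says that `Joins E x y` holds for all `x, y`. -/
def Joins (E : Finset (Finset (Fin n))) (x y : Fin n) : Prop :=
  ∃ (k : ℕ) (v : Fin (k + 1) → Fin n) (f : Fin k → Finset (Fin n)),
    IsBergePath E k v f ∧ (∃ i, v i = x) ∧ (∃ i, v i = y)

lemma Joins.symm {x y : Fin n} : Joins E x y → Joins E y x
  | ⟨k, v, f, hp, hx, hy⟩ => ⟨k, v, f, hp, hy, hx⟩

lemma joins_refl (x : Fin n) : Joins E x x :=
  ⟨0, fun _ => x, Fin.elim0, ⟨fun i j _ => Subsingleton.elim (α := Fin 1) i j, fun i => i.elim0,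
    fun i => i.elim0, fun i => i.elim0⟩, ⟨0, rfl⟩, ⟨0, rfl⟩⟩

lemma joins_of_mem_edge {x y : Fin n} {g : Finset (Fin n)} (hg : g ∈ E) (hx : x ∈ g)
    (hy : y ∈ g) : Joins E x y := by
  rcases eq_or_ne x y with rfl | hxy
  · exact joins_refl x
  refine ⟨1, ![x, y], ![g], ⟨injective_vec_two hxy, Function.injective_of_subsingleton _,
    ?_, ?_⟩, ⟨0, rfl⟩, ⟨1, rfl⟩⟩
  · intro i; fin_cases i; exact hg
  · intro i; fin_cases i; exact ⟨hx, hy⟩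

lemma joins_of_mem_sdiff {x y z : Fin n} {e f : Finset (Fin n)} (he : e ∈ E) (hf : f ∈ E)
    (hx : x ∈ e \ f) (hy : y ∈ f \ e) (hz : z ∈ e ∩ f) : Joins E x y := by
  simp only [Finset.mem_sdiff, Finset.mem_inter] at hx hy hz
  have hxz : x ≠ z := by rintro rfl; exact hx.2 hz.2
  have hxy : x ≠ y := by rintro rfl; exact hx.2 hy.1
  have hzy : z ≠ y := by rintro rfl; exact hy.2 hz.1
  have hef : e ≠ f := by rintro rfl; exact hx.2 hx.1
  refine ⟨2, ![x, z, y], ![e, f], ⟨injective_vec_three hxz hxy hzy, injective_vec_two hef,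
    ?_, ?_⟩, ⟨0, rfl⟩, ⟨2, rfl⟩⟩
  · intro i; fin_cases i <;> assumption
  · intro i; fin_cases i
    · exact ⟨hx.1, hz.1⟩
    · exact ⟨hz.2, hy.1⟩

end Paths

lemma connected_pair {n : ℕ} {e f : Finset (Fin n)} {z : Fin n} (hz : z ∈ e ∩ f)
    (hcover : ∀ x, x ∈ e ∨ x ∈ f) : Connected ({e, f} : Finset (Finset (Fin n))) := by
  have he : e ∈ ({e, f} : Finset (Finset (Fin n))) := by simp
  have hf : f ∈ ({e, f} : Finset (Finset (Fin n))) := by simp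
  intro x y
  change Joins _ x y
  by_cases hcommon : (x ∈ e ∧ y ∈ e) ∨ (x ∈ f ∧ y ∈ f)
  · rcases hcommon with ⟨hx, hy⟩ | ⟨hx, hy⟩
    · exact joins_of_mem_edge he hx hy
    · exact joins_of_mem_edge hf hx hy
  rcases hcover x with hx | hx
  · have hy : y ∈ f \ e := by simp only [Finset.mem_sdiff]; grind
    have hx : x ∈ e \ f := by simp only [Finset.mem_sdiff]; grind
    exact joins_of_mem_sdiff he hf hx hy hz
  · have hy : y ∈ e \ f := by simp only [Finset.mem_sdiff]; grind
    have hx : x ∈ f \ e := by simp only [Finset.mem_sdiff]; grind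
    exact (joins_of_mem_sdiff he hf hy hx hz).symm

/-- The initial segment `{0, …, r - 1}` and the final segment `{n - r, …, n - 1}`. -/
lemma exists_connected_card_eq_two {n r : ℕ} (hrn : r < n) (hnr : n + 1 ≤ 2 * r) :
    ∃ E : Finset (Finset (Fin n)), Uniform E r ∧ Connected E ∧ BPFree E 3 ∧ E.card = 2 := by
  let e : Finset (Fin n) := Finset.Iio ⟨r, hrn⟩
  let f : Finset (Fin n) := Finset.Ici ⟨n - r, by omega⟩
  have hmem_e (x : Fin n) : x ∈ e ↔ x.val < r := Finset.mem_Iio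
  have hmem_f (x : Fin n) : x ∈ f ↔ n - r ≤ x.val := Finset.mem_Ici
  have hef : e ≠ f := fun h => by
    have := (hmem_f ⟨0, by omega⟩).mp (h ▸ (hmem_e _).mpr (by simp; omega))
    simp at this; omega
  have hcard : ({e, f} : Finset (Finset (Fin n))).card = 2 := Finset.card_pair hef
  refine ⟨{e, f}, ?_, connected_pair (z := ⟨r - 1, by omega⟩) ?_ ?_, bpFree_of_card_lt (by omega),
    hcard⟩
  · simp only [Uniform, Finset.mem_insert, Finset.mem_singleton, forall_eq_or_imp, forall_eq]
    exact ⟨Fin.card_Iio _, by simp only [f, Fin.card_Ici]; omega⟩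
  · simp only [Finset.mem_inter, hmem_e, hmem_f]; omega
  · intro x; simp only [hmem_e, hmem_f]; omega

theorem stmt0 (r n : ℕ) (hn1 : r + 1 ≤ n) (hn2 : n ≤ 2 * r - 2) :
    exConn n r 3 = 2 ∧
    ∀ E : Finset (Finset (Fin n)), Uniform E r → Connected E → BPFree E 3 →
      E.card = 2 → ∃ e f : Finset (Fin n), e ≠ f ∧ E = {e, f} ∧ 2 ≤ (e ∩ f).card := by
  have hnr : n + 2 ≤ 2 * r := by omega
  refine ⟨IsGreatest.csSup_eq ⟨?_, ?_⟩, ?_⟩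
  · exact exists_connected_card_eq_two (by omega) (by omega)
  · rintro m ⟨E, hu, -, hE, rfl⟩
    exact card_le_two_of_bpFree hnr hu hE
  · intro E hu _ _ hcard
    obtain ⟨e, f, hef, rfl⟩ := Finset.card_eq_two.mp hcard
    exact ⟨e, f, hef, rfl, two_le_card_inter hnr (hu e (by simp)) (hu f (by simp))⟩

end Berge
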